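/- Leakage bound for polarized frozen sets: suppose [1:n] is partitioned according to the values h_i := H(U_i | Y^n, U^{i−1}) into L = {i : h_i ≤ δ}, M = {i : δ < h_i ≤ 1−δ}, and Hset = {i : h_i > 1−δ}, and let F = M ∪ Hset. Then I(U_F; Y^n) ≤ |M| + n·δ. -/

import Mathlib

open scoped Classical

/-- Probability of an event under a pmf `μ` on a finite sample space. -/
noncomputable def Pr {Ω : Type*} [Fintype Ω] (μ : Ω → ℝ) (E : Ω → Prop) : ℝ :=
  ∑ ω, if E ω then μ ω else 0

/-- Conditional Shannon entropy `H(A | B)` in bits. -/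
noncomputable def condEnt {Ω α β : Type*} [Fintype Ω] [Fintype α] [Fintype β]
    (μ : Ω → ℝ) (A : Ω → α) (B : Ω → β) : ℝ :=
  ∑ a : α, ∑ b : β,
    Pr μ (fun ω => A ω = a ∧ B ω = b) *
      Real.logb 2 (Pr μ (fun ω => B ω = b) / Pr μ (fun ω => A ω = a ∧ B ω = b))

/-- Mutual information `I(A;B) = H(A) − H(A|B)` in bits. -/
noncomputable def mutInfo {Ω α β : Type*} [Fintype Ω] [Fintype α] [Fintype β]
    (μ : Ω → ℝ) (A : Ω → α) (B : Ω → β) : ℝ :=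
  condEnt μ A (fun _ => (() : Unit)) - condEnt μ A B

/-- `h_i = H(U_i | Yⁿ, U^{i−1})` in bits. -/
noncomputable def hEnt {Ω 𝒴 : Type*} [Fintype Ω] [Fintype 𝒴] {n : ℕ}
    (μ : Ω → ℝ) (U : Ω → Fin n → ZMod 2) (Y : Ω → 𝒴) (i : Fin n) : ℝ :=
  condEnt μ (fun ω => U ω i)
    (fun ω => (Y ω, fun j : {j : Fin n // j < i} => U ω j.1))

/-! Writing `condEnt μ A B` as the `μ`-mean of the conditional surprisal
`log₂ (P(B = B ω) / P(A = A ω, B = B ω))` turns the chain rule and the invariance under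
injective relabelling into pointwise identities, while the bound `H(A | B) ≤ log₂ |α|` and
"conditioning reduces entropy" both follow from `log x ≤ x - 1` (Gibbs' inequality).

Peeling off the largest index `i` of `F` with the chain rule gives
`I(U_F; Y) = I(U_{F∖i}; Y) + H(U_i | U_{F∖i}) - H(U_i | U_{F∖i}, Y)`. The middle term is at most
one bit, and the last one is at least `h_i` because `(U_{F∖i}, Y)` is a function of
`(Y, U^{i-1})`. Hence `I(U_F; Y) ≤ ∑_{i ∈ F} (1 - h_i)`, where each summand is at most `1` on `M`
and at most `δ` on `Hset`. -/

lemma Real.logb_div_eq_logb_div_add {b p q r : ℝ} (hp : p ≠ 0) (hq : q ≠ 0) (hr : r ≠ 0) :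
    Real.logb b (r / p) = Real.logb b (r / q) + Real.logb b (q / p) := by
  rw [← Real.logb_mul (by positivity) (by positivity), div_mul_div_cancel₀ hq]

open Finset

section Probability

variable {Ω ξ : Type*} [Fintype Ω] [Fintype ξ] {μ : Ω → ℝ}

lemma Pr_nonneg (hμ : ∀ ω, 0 ≤ μ ω) (E : Ω → Prop) : 0 ≤ Pr μ E :=
  sum_nonneg fun ω _ => by split <;> simp [hμ ω]

lemma Pr_congr {E E' : Ω → Prop} (h : ∀ ω, E ω ↔ E' ω) : Pr μ E = Pr μ E' :=
  sum_congr rfl fun ω _ => if_congr (h ω) rfl rfl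

lemma Pr_pos_of_mem (hμ : ∀ ω, 0 ≤ μ ω) {E : Ω → Prop} {ω : Ω} (hω : 0 < μ ω) (hE : E ω) :
    0 < Pr μ E := by
  have := single_le_sum (f := fun ω => if E ω then μ ω else 0)
    (fun ω _ => by split <;> simp [hμ ω]) (mem_univ ω)
  simp only [hE, if_true] at this
  exact hω.trans_le this

lemma sum_Pr_fiber (X : Ω → ξ) (E : Ω → Prop) :
    ∑ x, Pr μ (fun ω => E ω ∧ X ω = x) = Pr μ E := by
  unfold Pr
  rw [sum_comm]
  refine sum_congr rfl fun ω _ => ?_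
  by_cases hE : E ω <;> simp [hE]

lemma Pr_true (hμ1 : ∑ ω, μ ω = 1) : Pr μ (fun _ => True) = 1 := by
  simp [Pr, hμ1]

lemma sum_Pr_eq_one (hμ1 : ∑ ω, μ ω = 1) (X : Ω → ξ) : ∑ x, Pr μ (fun ω => X ω = x) = 1 := by
  simpa [Pr_true hμ1] using sum_Pr_fiber (μ := μ) X (fun _ => True)

lemma sum_mul_comp (X : Ω → ξ) (g : ξ → ℝ) :
    ∑ ω, μ ω * g (X ω) = ∑ x, Pr μ (fun ω => X ω = x) * g x := by
  simp only [Pr, sum_mul, ite_mul, zero_mul]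
  rw [sum_comm]
  simp

lemma sum_mul_div_Pr_le (X : Ω → ξ) (f : ξ → ℝ) (hf : ∀ x, 0 ≤ f x) :
    ∑ ω, μ ω * (f (X ω) / Pr μ (fun ω' => X ω' = X ω)) ≤ ∑ x, f x := by
  rw [sum_mul_comp X (fun x => f x / Pr μ (fun ω' => X ω' = x))]
  refine sum_le_sum fun x _ => ?_
  rw [mul_div_left_comm]
  exact mul_le_of_le_one_right (hf x) (div_self_le_one _)

lemma sum_mul_logb_nonpos {b : ℝ} (hb : 1 < b) (hμ : ∀ ω, 0 ≤ μ ω) (hμ1 : ∑ ω, μ ω = 1)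
    (x : Ω → ℝ) (hx : ∀ ω, 0 < μ ω → 0 < x ω) (hsum : ∑ ω, μ ω * x ω ≤ 1) :
    ∑ ω, μ ω * Real.logb b (x ω) ≤ 0 := by
  have hlogb : 0 < Real.log b := Real.log_pos hb
  calc ∑ ω, μ ω * Real.logb b (x ω) ≤ ∑ ω, (μ ω * x ω - μ ω) / Real.log b := by
        refine sum_le_sum fun ω _ => ?_
        rcases (hμ ω).eq_or_lt with h | h
        · simp [← h]
        · rw [← mul_sub_one, mul_div_assoc]
          refine mul_le_mul_of_nonneg_left ?_ h.le
          rw [Real.logb, div_le_div_iff_of_pos_right hlogb]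
          exact Real.log_le_sub_one_of_pos (hx ω h)
    _ = (∑ ω, μ ω * x ω - 1) / Real.log b := by rw [← sum_div, sum_sub_distrib, hμ1]
    _ ≤ 0 := div_nonpos_of_nonpos_of_nonneg (by linarith) hlogb.le

lemma sum_mul_congr_of_pos (hμ : ∀ ω, 0 ≤ μ ω) {f g : Ω → ℝ}
    (h : ∀ ω, 0 < μ ω → f ω = g ω) : ∑ ω, μ ω * f ω = ∑ ω, μ ω * g ω :=
  sum_congr rfl fun ω _ => by
    rcases (hμ ω).eq_or_lt with h0 | h0
    · simp [← h0]
    · rw [h ω h0]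

end Probability

section Entropy

variable {Ω α β γ : Type*} [Fintype Ω] [Fintype α] [Fintype β] [Fintype γ] {μ : Ω → ℝ}

noncomputable def condSurprisal (μ : Ω → ℝ) (A : Ω → α) (B : Ω → β) (ω : Ω) : ℝ :=
  Real.logb 2 (Pr μ (fun ω' => B ω' = B ω) / Pr μ (fun ω' => A ω' = A ω ∧ B ω' = B ω))

lemma condEnt_eq_sum_condSurprisal (A : Ω → α) (B : Ω → β) :
    condEnt μ A B = ∑ ω, μ ω * condSurprisal μ A B ω := by
  have h := sum_mul_comp (μ := μ) (fun ω => (A ω, B ω))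
    (fun x => Real.logb 2 (Pr μ (fun ω' => B ω' = x.2) /
      Pr μ (fun ω' => A ω' = x.1 ∧ B ω' = x.2)))
  simp only [Prod.mk.injEq, Fintype.sum_prod_type] at h
  exact h.symm

lemma condEnt_comp_right {β' : Type*} [Fintype β'] (A : Ω → α) (B : Ω → β) {f : β → β'}
    (hf : Function.Injective f) : condEnt μ A (fun ω => f (B ω)) = condEnt μ A B := by
  simp only [condEnt_eq_sum_condSurprisal, condSurprisal, hf.eq_iff]

lemma condEnt_comp_left {α' : Type*} [Fintype α'] (A : Ω → α) (B : Ω → β) {f : α → α'}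
    (hf : Function.Injective f) : condEnt μ (fun ω => f (A ω)) B = condEnt μ A B := by
  simp only [condEnt_eq_sum_condSurprisal, condSurprisal, hf.eq_iff]

lemma condEnt_of_subsingleton [Subsingleton α] (A : Ω → α) (B : Ω → β) : condEnt μ A B = 0 := by
  rw [condEnt_eq_sum_condSurprisal]
  refine sum_eq_zero fun ω _ => ?_
  have hA : ∀ ω', A ω' = A ω := fun _ => Subsingleton.elim _ _
  simp only [condSurprisal, hA, true_and]
  by_cases h : Pr μ (fun ω' => B ω' = B ω) = 0 <;> simp [h]

lemma condEnt_pair_left (hμ : ∀ ω, 0 ≤ μ ω) (A : Ω → α) (B : Ω → β) (C : Ω → γ) :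
    condEnt μ (fun ω => (A ω, B ω)) C = condEnt μ A C + condEnt μ B (fun ω => (A ω, C ω)) := by
  simp only [condEnt_eq_sum_condSurprisal, ← sum_add_distrib, ← mul_add]
  refine sum_mul_congr_of_pos hμ fun ω hω => ?_
  have hABC : Pr μ (fun ω' => (A ω' = A ω ∧ B ω' = B ω) ∧ C ω' = C ω)
      = Pr μ (fun ω' => B ω' = B ω ∧ A ω' = A ω ∧ C ω' = C ω) :=
    Pr_congr fun _ => by tauto
  simp only [condSurprisal, Prod.mk.injEq, hABC]
  exact Real.logb_div_eq_logb_div_add (ne_of_gt (Pr_pos_of_mem hμ hω ⟨rfl, rfl, rfl⟩))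
    (ne_of_gt (Pr_pos_of_mem hμ hω ⟨rfl, rfl⟩)) (ne_of_gt (Pr_pos_of_mem hμ hω rfl))

lemma condEnt_le_logb_card (hμ : ∀ ω, 0 ≤ μ ω) (hμ1 : ∑ ω, μ ω = 1) [Nonempty α]
    (A : Ω → α) (B : Ω → β) : condEnt μ A B ≤ Real.logb 2 (Fintype.card α) := by
  set K : ℝ := (Fintype.card α : ℝ)
  have hK : 0 < K := by simp [K, Fintype.card_pos]
  set q : β → ℝ := fun b => Pr μ (fun ω => B ω = b)
  have hlogK : Real.logb 2 K = ∑ ω, μ ω * Real.logb 2 K := by rw [← sum_mul, hμ1, one_mul]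
  rw [← sub_nonpos, condEnt_eq_sum_condSurprisal, hlogK, ← sum_sub_distrib]
  simp only [← mul_sub]
  have hp : ∀ ω, 0 < μ ω → 0 < Pr μ (fun ω' => A ω' = A ω ∧ B ω' = B ω) :=
    fun ω hω => Pr_pos_of_mem hμ hω ⟨rfl, rfl⟩
  calc ∑ ω, μ ω * (condSurprisal μ A B ω - Real.logb 2 K)
      = ∑ ω, μ ω * Real.logb 2 (q (B ω) / K / Pr μ (fun ω' => A ω' = A ω ∧ B ω' = B ω)) := by
        refine sum_mul_congr_of_pos hμ fun ω hω => ?_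
        have hq : 0 < q (B ω) := Pr_pos_of_mem hμ hω rfl
        rw [condSurprisal, div_right_comm, Real.logb_div (by positivity [hp ω hω]) hK.ne']
    _ ≤ 0 := by
      refine sum_mul_logb_nonpos one_lt_two hμ hμ1 _ (fun ω hω => ?_) ?_
      · have hq : 0 < q (B ω) := Pr_pos_of_mem hμ hω rfl
        have := hp ω hω
        positivity
      calc ∑ ω, μ ω * (q (B ω) / K / Pr μ (fun ω' => A ω' = A ω ∧ B ω' = B ω))
          = ∑ ω, μ ω * (q (B ω) / K / Pr μ (fun ω' => (A ω', B ω') = (A ω, B ω))) := by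
            simp only [Prod.mk.injEq]
        _ ≤ ∑ x : α × β, q x.2 / K :=
            sum_mul_div_Pr_le (fun ω => (A ω, B ω)) (fun x => q x.2 / K)
              fun x => div_nonneg (Pr_nonneg hμ _) hK.le
        _ = 1 := by
            rw [Fintype.sum_prod_type]
            simp only [← sum_div, sum_const, card_univ, nsmul_eq_mul]
            rw [sum_Pr_eq_one hμ1 B, mul_one, div_self hK.ne']

lemma condEnt_le_one (hμ : ∀ ω, 0 ≤ μ ω) (hμ1 : ∑ ω, μ ω = 1) (A : Ω → ZMod 2) (B : Ω → β) :
    condEnt μ A B ≤ 1 := by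
  simpa using condEnt_le_logb_card hμ hμ1 A B

lemma condEnt_pair_right_le (hμ : ∀ ω, 0 ≤ μ ω) (hμ1 : ∑ ω, μ ω = 1)
    (A : Ω → α) (B : Ω → β) (C : Ω → γ) :
    condEnt μ A (fun ω => (B ω, C ω)) ≤ condEnt μ A B := by
  let pAB a b := Pr μ (fun ω => A ω = a ∧ B ω = b)
  let pBC b c := Pr μ (fun ω => B ω = b ∧ C ω = c)
  let pB b := Pr μ (fun ω => B ω = b)
  let f : α × β × γ → ℝ := fun x => pAB x.1 x.2.1 * pBC x.2.1 x.2.2 / pB x.2.1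
  let X ω := (A ω, B ω, C ω)
  let pX ω := Pr μ (fun ω' => X ω' = X ω)
  have hpos : ∀ ω, 0 < μ ω → 0 < pAB (A ω) (B ω) ∧ 0 < pBC (B ω) (C ω) ∧ 0 < pB (B ω) ∧
      0 < pX ω := fun ω hω =>
    ⟨Pr_pos_of_mem hμ hω ⟨rfl, rfl⟩, Pr_pos_of_mem hμ hω ⟨rfl, rfl⟩, Pr_pos_of_mem hμ hω rfl,
      Pr_pos_of_mem hμ hω rfl⟩
  have hf : ∑ x, f x ≤ 1 := by
    calc ∑ x, f x = ∑ a, ∑ b, pAB a b * (pB b / pB b) := by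
          simp only [f, pBC, Fintype.sum_prod_type, ← sum_div, ← mul_sum, mul_div_assoc,
            sum_Pr_fiber]
          rfl
      _ ≤ ∑ a, ∑ b, pAB a b :=
          sum_le_sum fun a _ => sum_le_sum fun b _ =>
            mul_le_of_le_one_right (Pr_nonneg hμ _) (div_self_le_one _)
      _ = 1 := by simp only [pAB, sum_Pr_fiber, sum_Pr_eq_one hμ1]
  rw [← sub_nonpos, condEnt_eq_sum_condSurprisal, condEnt_eq_sum_condSurprisal,
    ← sum_sub_distrib]
  simp only [← mul_sub]
  calc ∑ ω, μ ω * (condSurprisal μ A (fun ω => (B ω, C ω)) ω - condSurprisal μ A B ω)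
      = ∑ ω, μ ω * Real.logb 2 (f (X ω) / pX ω) := by
        refine sum_mul_congr_of_pos hμ fun ω hω => ?_
        obtain ⟨h1, h2, h3, h4⟩ := hpos ω hω
        simp only [condSurprisal, f, X, pX, pAB, pBC, pB, Prod.mk.injEq] at h1 h2 h3 h4 ⊢
        rw [← Real.logb_div (by positivity) (by positivity)]
        congr 1
        field_simp
    _ ≤ 0 := by
      refine sum_mul_logb_nonpos one_lt_two hμ hμ1 _ (fun ω hω => ?_) ?_
      · obtain ⟨h1, h2, h3, h4⟩ := hpos ω hω
        positivity
      exact (sum_mul_div_Pr_le X f fun x =>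
        div_nonneg (mul_nonneg (Pr_nonneg hμ _) (Pr_nonneg hμ _)) (Pr_nonneg hμ _)).trans hf

lemma condEnt_le_condEnt_comp_right (hμ : ∀ ω, 0 ≤ μ ω) (hμ1 : ∑ ω, μ ω = 1)
    (A : Ω → α) (B : Ω → β) (f : β → γ) : condEnt μ A B ≤ condEnt μ A (fun ω => f (B ω)) :=
  calc condEnt μ A B = condEnt μ A (fun ω => (f (B ω), B ω)) :=
        (condEnt_comp_right A B (f := fun b => (f b, b)) fun _ _ h => (Prod.ext_iff.1 h).2).symm
    _ ≤ condEnt μ A (fun ω => f (B ω)) := condEnt_pair_right_le hμ hμ1 A _ B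

lemma mutInfo_comp_left {α' : Type*} [Fintype α'] (A : Ω → α) (B : Ω → β) {f : α → α'}
    (hf : Function.Injective f) : mutInfo μ (fun ω => f (A ω)) B = mutInfo μ A B := by
  simp only [mutInfo, condEnt_comp_left _ _ hf]

lemma mutInfo_of_subsingleton [Subsingleton α] (A : Ω → α) (B : Ω → β) : mutInfo μ A B = 0 := by
  simp only [mutInfo, condEnt_of_subsingleton, sub_zero]

lemma mutInfo_pair_left (hμ : ∀ ω, 0 ≤ μ ω) (A : Ω → α) (B : Ω → β) (C : Ω → γ) :
    mutInfo μ (fun ω => (A ω, B ω)) C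
      = mutInfo μ A C + (condEnt μ B A - condEnt μ B (fun ω => (A ω, C ω))) := by
  have hunit : condEnt μ B (fun ω => (A ω, ())) = condEnt μ B A :=
    condEnt_comp_right B A (f := fun a => (a, ())) fun _ _ h => (Prod.ext_iff.1 h).1
  simp only [mutInfo, condEnt_pair_left hμ, hunit]
  ring

end Entropy

lemma mutInfo_le_sum_one_sub_hEnt {Ω 𝒴 : Type*} [Fintype Ω] [Fintype 𝒴] {n : ℕ} {μ : Ω → ℝ}
    (hμ : ∀ ω, 0 ≤ μ ω) (hμ1 : ∑ ω, μ ω = 1) (U : Ω → Fin n → ZMod 2) (Y : Ω → 𝒴)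
    (S : Finset (Fin n)) :
    mutInfo μ (fun ω => fun j : {j // j ∈ S} => U ω j.1) Y ≤ ∑ i ∈ S, (1 - hEnt μ U Y i) := by
  induction S using Finset.induction_on_max with
  | empty => simp [mutInfo_of_subsingleton]
  | insert i S hlt ih =>
    let US ω := fun j : {j // j ∈ S} => U ω j.1
    have hsplit : mutInfo μ (fun ω => fun j : {j // j ∈ insert i S} => U ω j.1) Y
        = mutInfo μ (fun ω => (US ω, U ω i)) Y := by
      refine (mutInfo_comp_left (fun ω => fun j : {j // j ∈ insert i S} => U ω j.1) Y
        (f := fun v => (fun j : {j // j ∈ S} => v ⟨j, mem_insert_of_mem j.2⟩,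
          v ⟨i, mem_insert_self i S⟩)) ?_).symm
      intro v w h
      funext ⟨j, hj⟩
      rcases mem_insert.1 hj with rfl | hjS
      · exact congrArg Prod.snd h
      · exact congrFun (congrArg Prod.fst h) ⟨j, hjS⟩
    have hbit : condEnt μ (fun ω => U ω i) US ≤ 1 := condEnt_le_one hμ hμ1 _ _
    have hpast : hEnt μ U Y i ≤ condEnt μ (fun ω => U ω i) (fun ω => (US ω, Y ω)) :=
      condEnt_le_condEnt_comp_right hμ hμ1 (fun ω => U ω i)
        (fun ω => (Y ω, fun j : {j // j < i} => U ω j.1))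
        fun p => (fun j : {j // j ∈ S} => p.2 ⟨j, hlt j j.2⟩, p.1)
    rw [hsplit, mutInfo_pair_left hμ, sum_insert fun h => lt_irrefl i (hlt i h)]
    linarith

theorem polarized_frozen_leakage_bound_general {Ω 𝒴 : Type*} [Fintype Ω] [Fintype 𝒴]
    (n : ℕ) (μ : Ω → ℝ) (hμ0 : ∀ ω, 0 ≤ μ ω) (hμ1 : ∑ ω, μ ω = 1)
    (U : Ω → Fin n → ZMod 2) (Y : Ω → 𝒴)
    (δ : ℝ) (hδ0 : 0 < δ)
    (M Hset F : Finset (Fin n))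
    (hM : M = Finset.univ.filter
      (fun i => δ < hEnt μ U Y i ∧ hEnt μ U Y i ≤ 1 - δ))
    (hH : Hset = Finset.univ.filter (fun i => 1 - δ < hEnt μ U Y i))
    (hF : F = M ∪ Hset) :
    mutInfo μ (fun ω => (fun j : {j // j ∈ F} => U ω j.1)) Y
      ≤ (M.card : ℝ) + n * δ := by
  have hdisj : Disjoint M Hset := disjoint_left.2 fun i hiM hiH => by
    simp only [hM, hH, mem_filter] at hiM hiH
    linarith [hiM.2.2, hiH.2]
  have hHcard : (Hset.card : ℝ) ≤ n := by
    exact_mod_cast (card_le_univ Hset).trans_eq (Fintype.card_fin n)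
  calc mutInfo μ (fun ω => (fun j : {j // j ∈ F} => U ω j.1)) Y
      ≤ ∑ i ∈ M, (1 - hEnt μ U Y i) + ∑ i ∈ Hset, (1 - hEnt μ U Y i) := by
        rw [← sum_union hdisj, ← hF]
        exact mutInfo_le_sum_one_sub_hEnt hμ0 hμ1 U Y F
    _ ≤ ∑ _i ∈ M, 1 + ∑ _i ∈ Hset, δ := by
        gcongr with i hi i hi
        · simp only [hM, mem_filter] at hi
          linarith
        · simp only [hH, mem_filter] at hi
          linarith
    _ ≤ M.card + n * δ := by
        simp only [sum_const, nsmul_eq_mul, mul_one]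
        gcongr

/-- Leakage bound for polarized frozen sets.  Partition `[1:n]`
according to `h_i = H(U_i | Yⁿ, U^{i−1})` into `L = {i : h_i ≤ δ}`,
`M = {i : δ < h_i ≤ 1−δ}` and `Hset = {i : h_i > 1−δ}`, and let
`F = M ∪ Hset`.  Then `I(U_F; Yⁿ) ≤ |M| + n·δ`. -/
theorem polarized_frozen_leakage_bound {Ω 𝒴 : Type*} [Fintype Ω] [Fintype 𝒴]
    (n : ℕ) (μ : Ω → ℝ) (hμ0 : ∀ ω, 0 ≤ μ ω) (hμ1 : ∑ ω, μ ω = 1)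
    (U : Ω → Fin n → ZMod 2) (Y : Ω → 𝒴)
    (δ : ℝ) (hδ0 : 0 < δ) (hδ1 : δ < 1 / 2)
    (L M Hset F : Finset (Fin n))
    (hL : L = Finset.univ.filter (fun i => hEnt μ U Y i ≤ δ))
    (hM : M = Finset.univ.filter
      (fun i => δ < hEnt μ U Y i ∧ hEnt μ U Y i ≤ 1 - δ))
    (hH : Hset = Finset.univ.filter (fun i => 1 - δ < hEnt μ U Y i))
    (hF : F = M ∪ Hset) :
    mutInfo μ (fun ω => (fun j : {j // j ∈ F} => U ω j.1)) Y
      ≤ (M.card : ℝ) + n * δ :=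
  polarized_frozen_leakage_bound_general n μ hμ0 hμ1 U Y δ hδ0 M Hset F hM hH hF
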